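/- arXiv:1610.02253 — 4 statements merged into one kernel-verified Lean document; each statement's English description precedes it below -/
import Mathlib

section
/- (Theorem 1: FBA does not improve the NC spatially smoothed signal subspace.) Let M, m, L, N be positive integers and let J_1,…,J_L ∈ ℝ^{m×M} be matrices satisfying the exchange symmetry Π_m J_ℓ Π_M = J_{L+1−ℓ} for all 1 ≤ ℓ ≤ L. For X ∈ ℂ^{M×N} define the augmented matrix X^{nc} = [X; Π_M conj(X)] ∈ ℂ^{2M×N}, the NC spatially smoothed matrix X_SS = [(I_2⊗J_1)X^{nc}, (I_2⊗J_2)X^{nc}, …, (I_2⊗J_L)X^{nc}] ∈ ℂ^{2m×NL} (horizontal block concatenation), and the forward–backward-averaged matrix X̃ = [X_SS, Π_{2m}·conj(X_SS)·Π_{NL}] ∈ ℂ^{2m×2NL}. Then X̃ X̃^H = 2 · X_SS X_SS^H, and consequently the column space of X̃ equals the column space of X_SS. -/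
/-! The exchange symmetry of the `J ℓ`, together with the conjugate symmetry of `X^{nc}`,
makes `X_SS` conjugate-persymmetric: reversing both row indices and the block index `ℓ`
conjugates the entry. Hence the backward half `Π conj(X_SS) Π` of `X̃` is `X_SS` with
its snapshot index reversed, so `X̃` consists of two column permutations of `X_SS`. Such a
matrix has twice the Gram matrix of `X_SS` and the same set of columns. -/

open Matrix Complex
open scoped Kronecker

/-- The `K × K` exchange matrix (ones on the antidiagonal, zeros elsewhere), over a
general scalar type. -/
def exch (α : Type*) [Zero α] [One α] (K : ℕ) : Matrix (Fin K) (Fin K) α :=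
  Matrix.of fun i j => if (i : ℕ) + (j : ℕ) + 1 = K then 1 else 0

/-- The augmented (non-circular) measurement matrix `X^{nc} = [X; Π_M conj(X)]`,
indexed blockwise by `Fin 2 × Fin M`. -/
noncomputable def Xnc {M N : ℕ} (X : Matrix (Fin M) (Fin N) ℂ) :
    Matrix (Fin 2 × Fin M) (Fin N) ℂ :=
  Matrix.of fun i j =>
    if i.1 = 0 then X i.2 j else (exch ℂ M * X.map (starRingEnd ℂ)) i.2 j

/-- The NC spatially smoothed matrix
`X_SS = [(I₂⊗J₁)X^{nc}, …, (I₂⊗J_L)X^{nc}]`, with the horizontal block concatenation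
indexed by `Fin L × Fin N` (block index first). -/
noncomputable def XSS {M m L N : ℕ} (J : Fin L → Matrix (Fin m) (Fin M) ℝ)
    (X : Matrix (Fin M) (Fin N) ℂ) :
    Matrix (Fin 2 × Fin m) (Fin L × Fin N) ℂ :=
  Matrix.of fun i c =>
    (((1 : Matrix (Fin 2) (Fin 2) ℂ) ⊗ₖ (J c.1).map (Complex.ofReal)) * Xnc X) i c.2

/-- The forward–backward-averaged matrix `X̃ = [X_SS, Π_{2m} conj(X_SS) Π_{NL}]`.
On the mixed-radix index sets, the exchange matrices `Π_{2m}` and `Π_{NL}` are the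
Kronecker products `Π₂ ⊗ Π_m` and `Π_L ⊗ Π_N` of the one-dimensional exchange matrices. -/
noncomputable def Xfba {M m L N : ℕ} (J : Fin L → Matrix (Fin m) (Fin M) ℝ)
    (X : Matrix (Fin M) (Fin N) ℂ) :
    Matrix (Fin 2 × Fin m) (Fin 2 × (Fin L × Fin N)) ℂ :=
  Matrix.of fun i c =>
    if c.1 = 0 then XSS J X i c.2
    else ((exch ℂ 2 ⊗ₖ exch ℂ m) * (XSS J X).map (starRingEnd ℂ) *
      (exch ℂ L ⊗ₖ exch ℂ N)) i c.2

namespace Matrix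

variable {α : Type*}

lemma kronecker_toMatrix_toPEquiv {l m n o : Type*} [MulZeroOneClass α] [DecidableEq m]
    [DecidableEq o] (e : l ≃ m) (f : n ≃ o) :
    (e.toPEquiv.toMatrix : Matrix l m α) ⊗ₖ (f.toPEquiv.toMatrix : Matrix n o α) =
      (e.prodCongr f).toPEquiv.toMatrix := by
  ext ⟨i₁, i₂⟩ ⟨j₁, j₂⟩
  simp only [kroneckerMap_apply, PEquiv.toMatrix_apply, Equiv.toPEquiv_apply, Option.mem_def,
    Option.some_inj, Equiv.prodCongr_apply, Prod.map, Prod.ext_iff]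
  split_ifs <;> simp_all

lemma submatrix_perms_mul_conjTranspose {m n κ : Type*} [Fintype n] [Fintype κ]
    [NonUnitalNonAssocSemiring α] [Star α] (A : Matrix m n α) (σ : κ → Equiv.Perm n) :
    A.submatrix id (fun k : κ × n => σ k.1 k.2) * (A.submatrix id fun k : κ × n => σ k.1 k.2)ᴴ
      = Fintype.card κ • (A * Aᴴ) := by
  ext i j
  simp only [mul_apply, conjTranspose_apply, submatrix_apply, id, Fintype.sum_prod_type,
    smul_apply, Equiv.sum_comp (σ _) (fun c => A i c * star (A j c)), Finset.sum_const,
    Finset.card_univ]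

lemma range_mulVecLin_submatrix_of_surjective {R m n p : Type*} [CommSemiring R] [Fintype n]
    [Fintype p] (A : Matrix m n R) {g : p → n} (hg : Function.Surjective g) :
    LinearMap.range (A.submatrix id g).mulVecLin = LinearMap.range A.mulVecLin := by
  rw [range_mulVecLin, range_mulVecLin]
  exact congrArg _ (hg.range_comp A.col)

end Matrix

lemma exch_eq_toMatrix_revPerm (α : Type*) [Zero α] [One α] (K : ℕ) :
    exch α K = (Fin.revPerm : Equiv.Perm (Fin K)).toPEquiv.toMatrix := by
  ext i j
  simp only [exch, of_apply, PEquiv.toMatrix_apply, Equiv.toPEquiv_apply, Option.mem_def,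
    Option.some_inj, Fin.revPerm_apply, Fin.ext_iff, Fin.val_rev]
  have := j.isLt
  exact if_congr (by omega) rfl rfl

lemma exch_kronecker_exch_mul_mul_exch_kronecker_exch {α : Type*} [NonAssocSemiring α]
    {a b c d : ℕ} (A : Matrix (Fin a × Fin b) (Fin c × Fin d) α) :
    (exch α a ⊗ₖ exch α b) * A * (exch α c ⊗ₖ exch α d) =
      A.submatrix (Prod.map Fin.rev Fin.rev) (Prod.map Fin.rev Fin.rev) := by
  simp only [exch_eq_toMatrix_revPerm, kronecker_toMatrix_toPEquiv,
    PEquiv.toMatrix_toPEquiv_mul, PEquiv.mul_toMatrix_toPEquiv, submatrix_submatrix,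
    Equiv.prodCongr_symm, Fin.revPerm_symm]
  rfl

lemma conj_Xnc_rev {M N : ℕ} (X : Matrix (Fin M) (Fin N) ℂ) (a : Fin 2) (q : Fin M)
    (n : Fin N) : starRingEnd ℂ (Xnc X (a.rev, q.rev) n) = Xnc X (a, q) n := by
  fin_cases a <;> simp [Xnc, exch_eq_toMatrix_revPerm, PEquiv.toMatrix_toPEquiv_mul]

lemma apply_rev_rev_rev {M m L : ℕ} {J : Fin L → Matrix (Fin m) (Fin M) ℝ}
    (hJ : ∀ ℓ : Fin L, exch ℝ m * J ℓ * exch ℝ M = J ℓ.rev) (ℓ : Fin L) (b : Fin m)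
    (q : Fin M) : J ℓ.rev b.rev q.rev = J ℓ b q := by
  simp [← hJ ℓ, exch_eq_toMatrix_revPerm, PEquiv.toMatrix_toPEquiv_mul,
    PEquiv.mul_toMatrix_toPEquiv]

lemma XSS_apply {M m L N : ℕ} (J : Fin L → Matrix (Fin m) (Fin M) ℝ)
    (X : Matrix (Fin M) (Fin N) ℂ) (a : Fin 2) (b : Fin m) (ℓ : Fin L) (n : Fin N) :
    XSS J X (a, b) (ℓ, n) = ∑ q : Fin M, (J ℓ b q : ℂ) * Xnc X (a, q) n := by
  simp [XSS, mul_apply, Fintype.sum_prod_type, one_apply]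

lemma conj_XSS_rev {M m L N : ℕ} {J : Fin L → Matrix (Fin m) (Fin M) ℝ}
    (hJ : ∀ ℓ : Fin L, exch ℝ m * J ℓ * exch ℝ M = J ℓ.rev)
    (X : Matrix (Fin M) (Fin N) ℂ) (a : Fin 2) (b : Fin m) (ℓ : Fin L) (n : Fin N) :
    starRingEnd ℂ (XSS J X (a.rev, b.rev) (ℓ.rev, n)) = XSS J X (a, b) (ℓ, n) := by
  rw [XSS_apply, XSS_apply, map_sum, ← Equiv.sum_comp Fin.revPerm]
  refine Finset.sum_congr rfl fun q _ => ?_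
  rw [Fin.revPerm_apply, map_mul, conj_ofReal, apply_rev_rev_rev hJ, conj_Xnc_rev]

def fbaColumnPerm (L N : ℕ) : Fin 2 → Equiv.Perm (Fin L × Fin N) :=
  ![Equiv.refl _, (Equiv.refl _).prodCongr Fin.revPerm]

lemma Xfba_eq_submatrix {M m L N : ℕ} {J : Fin L → Matrix (Fin m) (Fin M) ℝ}
    (hJ : ∀ ℓ : Fin L, exch ℝ m * J ℓ * exch ℝ M = J ℓ.rev) (X : Matrix (Fin M) (Fin N) ℂ) :
    Xfba J X = (XSS J X).submatrix id fun k => fbaColumnPerm L N k.1 k.2 := by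
  ext ⟨a, b⟩ ⟨k, ℓ, n⟩
  fin_cases k
  · simp [Xfba, fbaColumnPerm]
  · simpa [Xfba, fbaColumnPerm, exch_kronecker_exch_mul_mul_exch_kronecker_exch] using
      conj_XSS_rev hJ X a b ℓ n.rev

theorem fba_no_gain_general (M m L N : ℕ)
    (J : Fin L → Matrix (Fin m) (Fin M) ℝ)
    (hJ : ∀ ℓ : Fin L, exch ℝ m * J ℓ * exch ℝ M = J ℓ.rev)
    (X : Matrix (Fin M) (Fin N) ℂ) :
    Xfba J X * (Xfba J X)ᴴ = (2 : ℂ) • (XSS J X * (XSS J X)ᴴ) ∧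
    LinearMap.range (Matrix.mulVecLin (Xfba J X))
      = LinearMap.range (Matrix.mulVecLin (XSS J X)) := by
  rw [Xfba_eq_submatrix hJ X, submatrix_perms_mul_conjTranspose, Fintype.card_fin]
  exact ⟨(ofNat_smul_eq_nsmul ℂ 2 _).symm,
    range_mulVecLin_submatrix_of_surjective _ fun c => ⟨(0, c), rfl⟩⟩

/-- **Theorem 1** (FBA does not improve the NC spatially smoothed signal subspace).
If the selection matrices satisfy the exchange symmetry `Π_m J_ℓ Π_M = J_{L+1-ℓ}`,
then the forward–backward-averaged matrix `X̃` satisfies `X̃ X̃ᴴ = 2 X_SS X_SSᴴ`, and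
consequently the column space of `X̃` equals the column space of `X_SS`. -/
theorem fba_no_gain (M m L N : ℕ) (hM : 0 < M) (hm : 0 < m) (hL : 0 < L) (hN : 0 < N)
    (J : Fin L → Matrix (Fin m) (Fin M) ℝ)
    (hJ : ∀ ℓ : Fin L, exch ℝ m * J ℓ * exch ℝ M = J ℓ.rev)
    (X : Matrix (Fin M) (Fin N) ℂ) :
    Xfba J X * (Xfba J X)ᴴ = (2 : ℂ) • (XSS J X * (XSS J X)ᴴ) ∧
    LinearMap.range (Matrix.mulVecLin (Xfba J X))
      = LinearMap.range (Matrix.mulVecLin (XSS J X)) :=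
  fba_no_gain_general M m L N J hJ X
end

section
/- Let M, L be integers with 1 ≤ L ≤ M, m = M−L+1, and μ, t ∈ ℝ. Let a ∈ ℂ^m be any unit-modulus geometric vector with entries a_p = exp(i(p+t)μ) for p = 0,…,m−1. Then the weighted quadratic form of the subarray selection matrices satisfies Σ_{ℓ=1}^{L} Σ_{n=1}^{L} exp(iμ(n−ℓ)) · a^H (J_ℓ J_nᵀ) a = Σ_{ℓ=1}^{L} Σ_{n=1}^{L} max(m − |ℓ−n|, 0) = (1/3)·(k+1)·(k·(2k − 3M − 2) + 6·m·L) − m·L, where k = min{L, M−L}; in particular this quantity is a real number independent of μ and t. -/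
open Matrix Complex

/-- Subarray selection matrix with (0-based) shift `ℓ`:
`(sel M L ℓ)_{p,q} = 1` iff `q = p + ℓ`.  The 1-based subarray selection matrix
`J_ℓ = [0_{m×(ℓ-1)}, I_m, 0_{m×(L-ℓ)}]` with `m = M - L + 1` is `sel M L (ℓ - 1)`. -/
def sel (M L ℓ : ℕ) : Matrix (Fin (M - L + 1)) (Fin M) ℂ :=
  Matrix.of fun p q => if (q : ℕ) = (p : ℕ) + ℓ then 1 else 0

lemma count_lt (m c : ℕ) : (∑ p ∈ Finset.range m, if p < c then (1:ℕ) else 0) = min m c := by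
  induction m with
  | zero => simp
  | succ m ih => rw [Finset.sum_range_succ, ih]; split_ifs <;> omega

lemma count_le (m d : ℕ) : (∑ p ∈ Finset.range m, if d ≤ p then (1:ℕ) else 0) = m - d := by
  induction m with
  | zero => simp
  | succ m ih => rw [Finset.sum_range_succ, ih]; split_ifs <;> omega

lemma count_pairs (m ℓ n : ℕ) :
    (∑ p ∈ Finset.range m, ∑ q ∈ Finset.range m, if p + ℓ = q + n then (1:ℕ) else 0)
      = m - (max ℓ n - min ℓ n) := by
  have inner : ∀ p, (∑ q ∈ Finset.range m, if p + ℓ = q + n then (1:ℕ) else 0)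
      = if n ≤ p + ℓ ∧ p + ℓ - n < m then 1 else 0 := by
    intro p
    by_cases h : n ≤ p + ℓ ∧ p + ℓ - n < m
    · rw [if_pos h, Finset.sum_eq_single (p + ℓ - n)]
      · rw [if_pos (by omega)]
      · intro q hq hne; rw [if_neg]; simp only [Finset.mem_range] at hq; omega
      · intro h'; simp only [Finset.mem_range] at h'; omega
    · rw [if_neg h]
      apply Finset.sum_eq_zero; intro q hq; rw [if_neg]
      simp only [Finset.mem_range] at hq; omega
  rw [Finset.sum_congr rfl fun p _ => inner p]
  rcases le_or_gt n ℓ with hc | hc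
  · have : ∀ p ∈ Finset.range m, (if n ≤ p + ℓ ∧ p + ℓ - n < m then (1:ℕ) else 0)
        = if p < m - (ℓ - n) then 1 else 0 := by
      intro p _; congr 1; simp only [eq_iff_iff]; omega
    rw [Finset.sum_congr rfl this, count_lt]
    omega
  · have : ∀ p ∈ Finset.range m, (if n ≤ p + ℓ ∧ p + ℓ - n < m then (1:ℕ) else 0)
        = if n - ℓ ≤ p then 1 else 0 := by
      intro p hp; simp only [Finset.mem_range] at hp; congr 1; simp only [eq_iff_iff]; omega
    rw [Finset.sum_congr rfl this, count_le]
    omega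

lemma term_eq (M L : ℕ) (hL : 1 ≤ L) (hLM : L ≤ M) (μ t : ℝ)
    (a : Fin (M - L + 1) → ℂ)
    (ha : ∀ p : Fin (M - L + 1),
      a p = Complex.exp (Complex.I * (((p : ℝ) + t) : ℝ) * (μ : ℂ)))
    (ℓ n : ℕ) (hℓ : ℓ < L) (hn : n < L) :
    Complex.exp (Complex.I * (((n : ℝ) - (ℓ : ℝ)) : ℝ) * (μ : ℂ)) *
      (star a ⬝ᵥ ((sel M L ℓ * (sel M L n)ᵀ) *ᵥ a))
    = ((max (((M - L + 1 : ℕ) : ℤ) - |(ℓ : ℤ) - (n : ℤ)|) 0 : ℤ) : ℂ) := by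
  have hstar : ∀ w : ℂ, star (Complex.exp w) = Complex.exp (star w) := by
    intro w
    rw [Complex.star_def, Complex.exp_conj]
  have hB : ∀ p q : Fin (M - L + 1), (sel M L ℓ * (sel M L n)ᵀ) p q
      = if (p : ℕ) + ℓ = (q : ℕ) + n then 1 else 0 := by
    intro p q
    have hpℓ : (p : ℕ) + ℓ < M := by have := p.isLt; omega
    rw [Matrix.mul_apply]
    rw [Finset.sum_eq_single (⟨(p:ℕ) + ℓ, hpℓ⟩ : Fin M)]
    · simp [sel, Matrix.transpose_apply, eq_comm]
    · intro r _ hne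
      simp only [sel, Matrix.transpose_apply, Matrix.of_apply]
      rw [if_neg (by simpa [Fin.ext_iff] using hne)]
      simp
    · simp
  have hquad : star a ⬝ᵥ ((sel M L ℓ * (sel M L n)ᵀ) *ᵥ a)
      = ∑ p : Fin (M - L + 1), ∑ q : Fin (M - L + 1),
          (if (p : ℕ) + ℓ = (q : ℕ) + n then star (a p) * a q else 0) := by
    simp only [dotProduct, Matrix.mulVec, Pi.star_apply, Finset.mul_sum]
    apply Finset.sum_congr rfl
    intro p _
    apply Finset.sum_congr rfl
    intro q _
    rw [hB p q]
    split_ifs <;> ring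
  rw [hquad, Finset.mul_sum]
  have hterm : ∀ p q : Fin (M - L + 1),
      Complex.exp (Complex.I * (((n : ℝ) - (ℓ : ℝ)) : ℝ) * (μ : ℂ)) *
        (if (p : ℕ) + ℓ = (q : ℕ) + n then star (a p) * a q else 0)
      = if (p : ℕ) + ℓ = (q : ℕ) + n then 1 else 0 := by
    intro p q
    split_ifs with h
    · rw [ha p, ha q, hstar, ← Complex.exp_add, ← Complex.exp_add, ← Complex.exp_zero]
      congr 1
      have hc : ((p : ℕ) : ℂ) + (ℓ : ℂ) = ((q : ℕ) : ℂ) + (n : ℂ) := by exact_mod_cast h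
      have hs : star (Complex.I * ((((p : ℕ) : ℝ) + t : ℝ) : ℂ) * (μ : ℂ))
          = -(Complex.I * ((((p : ℕ) : ℝ) + t : ℝ) : ℂ) * (μ : ℂ)) := by
        simp only [Complex.star_def, _root_.map_mul, Complex.conj_I, Complex.conj_ofReal]
        ring
      rw [hs]
      push_cast
      linear_combination -Complex.I * (μ : ℂ) * hc
    · simp
  rw [Finset.sum_congr rfl fun p _ => by
    rw [Finset.mul_sum, Finset.sum_congr rfl fun q _ => hterm p q]]
  have hcast : (∑ p : Fin (M - L + 1), ∑ q : Fin (M - L + 1),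
        if (p : ℕ) + ℓ = (q : ℕ) + n then (1:ℂ) else 0)
      = ((∑ p ∈ Finset.range (M - L + 1), ∑ q ∈ Finset.range (M - L + 1),
          if p + ℓ = q + n then (1:ℕ) else 0 : ℕ) : ℂ) := by
    push_cast
    rw [Fin.sum_univ_eq_sum_range (fun p => ∑ q : Fin (M - L + 1),
      if p + ℓ = (q : ℕ) + n then (1:ℂ) else 0)]
    apply Finset.sum_congr rfl
    intro p _
    rw [Fin.sum_univ_eq_sum_range (fun q => if p + ℓ = q + n then (1:ℂ) else 0)]
  rw [hcast, count_pairs]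
  have hZ : ((M - L + 1 - (max ℓ n - min ℓ n) : ℕ) : ℤ)
      = max (((M - L + 1 : ℕ) : ℤ) - |(ℓ : ℤ) - (n : ℤ)|) 0 := by
    rcases le_total (n : ℤ) (ℓ : ℤ) with hc | hc
    · rw [_root_.abs_of_nonneg (by omega)]; omega
    · rw [_root_.abs_of_nonpos (by omega)]; omega
  rw [← hZ]
  norm_cast

lemma sumT (m : ℤ) (hm : 1 ≤ m) (L : ℕ) :
    2 * ∑ j ∈ Finset.range L, max (m - ((j : ℤ) + 1)) 0
      = min (L : ℤ) (m - 1) * (2 * m - min (L : ℤ) (m - 1) - 1) := by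
  induction L with
  | zero => simp; omega
  | succ L ih =>
    rw [Finset.sum_range_succ]
    push_cast
    rcases le_or_gt ((L:ℤ)+1) (m-1) with h | h
    · rw [max_eq_left (by omega), min_eq_left h, min_eq_left (by omega : (L:ℤ) ≤ m-1)] at *
      linear_combination ih
    · rw [max_eq_right (by omega), min_eq_right (by omega : m-1 ≤ (L:ℤ)+1),
        min_eq_right (by omega : m-1 ≤ (L:ℤ))] at *
      linear_combination ih

lemma sumS (m : ℤ) (hm : 1 ≤ m) (L : ℕ) :
    3 * ∑ ℓ ∈ Finset.range L, ∑ n ∈ Finset.range L, max (m - |(ℓ : ℤ) - (n : ℤ)|) 0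
      = (min (L : ℤ) (m - 1) + 1) *
          (min (L : ℤ) (m - 1) * (2 * min (L : ℤ) (m - 1) - 3 * m - 3 * (L : ℤ) + 1)
            + 6 * m * (L : ℤ)) - 3 * m * (L : ℤ) := by
  induction L with
  | zero => simp [min_eq_left (by omega : (0:ℤ) ≤ m - 1)]
  | succ L ih =>
    have hrefl : (∑ n ∈ Finset.range L, max (m - |(L : ℤ) - (n : ℤ)|) 0)
        = ∑ j ∈ Finset.range L, max (m - ((j:ℤ) + 1)) 0 := by
      rw [← Finset.sum_range_reflect]
      apply Finset.sum_congr rfl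
      intro j hj
      simp only [Finset.mem_range] at hj
      congr 1
      have : ((L - 1 - j : ℕ) : ℤ) = (L : ℤ) - 1 - j := by omega
      rw [this, _root_.abs_of_nonneg (by omega)]
      ring
    have hT := sumT m hm L
    have key : (∑ ℓ ∈ Finset.range (L+1), ∑ n ∈ Finset.range (L+1),
          max (m - |(ℓ : ℤ) - (n : ℤ)|) 0)
        = (∑ ℓ ∈ Finset.range L, ∑ n ∈ Finset.range L, max (m - |(ℓ : ℤ) - (n : ℤ)|) 0)
          + 2 * (∑ j ∈ Finset.range L, max (m - ((j:ℤ) + 1)) 0) + m := by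
      rw [Finset.sum_range_succ]
      rw [Finset.sum_range_succ (fun n => max (m - |(L : ℤ) - (n : ℤ)|) 0)]
      have h1 : ∀ ℓ ∈ Finset.range L, (∑ n ∈ Finset.range (L+1), max (m - |(ℓ : ℤ) - (n : ℤ)|) 0)
          = (∑ n ∈ Finset.range L, max (m - |(ℓ : ℤ) - (n : ℤ)|) 0)
            + max (m - |(ℓ : ℤ) - (L : ℤ)|) 0 := by
        intro ℓ _; rw [Finset.sum_range_succ]
      rw [Finset.sum_congr rfl h1, Finset.sum_add_distrib]
      have h2 : (∑ ℓ ∈ Finset.range L, max (m - |(ℓ : ℤ) - (L : ℤ)|) 0)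
          = ∑ j ∈ Finset.range L, max (m - ((j:ℤ) + 1)) 0 := by
        rw [← hrefl]
        apply Finset.sum_congr rfl
        intro ℓ _
        rw [abs_sub_comm]
      rw [h2, hrefl]
      have h3 : max (m - |(L:ℤ) - (L:ℤ)|) 0 = m := by
        simp; omega
      rw [h3]; ring
    rw [key]
    push_cast
    rcases le_or_gt ((L:ℤ)+1) (m-1) with h | h
    · rw [min_eq_left h]
      rw [min_eq_left (by omega : (L:ℤ) ≤ m-1)] at ih hT
      linear_combination ih + 3 * hT
    · rw [min_eq_right (by omega : m-1 ≤ (L:ℤ)+1)]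
      rw [min_eq_right (by omega : m-1 ≤ (L:ℤ))] at ih hT
      linear_combination ih + 3 * hT

/-- The weighted quadratic form `Σ_{ℓ,n} exp(iμ(n-ℓ)) aᴴ (J_ℓ J_nᵀ) a` of the subarray
selection matrices, for any unit-modulus geometric vector `a_p = exp(i(p+t)μ)`, equals
`Σ_{ℓ,n} max(m - |ℓ-n|, 0)` and evaluates in closed form to
`(1/3)(k+1)(k(2k - 3M - 2) + 6mL) - mL` with `k = min{L, M-L}` and `m = M-L+1`;
in particular it is real and independent of `μ` and `t`. -/
theorem quadratic_form_cp (M L : ℕ) (hL : 1 ≤ L) (hLM : L ≤ M) (μ t : ℝ)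
    (a : Fin (M - L + 1) → ℂ)
    (ha : ∀ p : Fin (M - L + 1),
      a p = Complex.exp (Complex.I * (((p : ℝ) + t) : ℝ) * (μ : ℂ))) :
    (∑ ℓ : Fin L, ∑ n : Fin L,
        Complex.exp (Complex.I * (((n : ℝ) - (ℓ : ℝ)) : ℝ) * (μ : ℂ)) *
          (star a ⬝ᵥ ((sel M L (ℓ : ℕ) * (sel M L (n : ℕ))ᵀ) *ᵥ a)))
      = ∑ ℓ : Fin L, ∑ n : Fin L,
          ((max (((M - L + 1 : ℕ) : ℤ) - |((ℓ : ℕ) : ℤ) - ((n : ℕ) : ℤ)|) 0 : ℤ) : ℂ) ∧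
    (∑ ℓ : Fin L, ∑ n : Fin L,
        Complex.exp (Complex.I * (((n : ℝ) - (ℓ : ℝ)) : ℝ) * (μ : ℂ)) *
          (star a ⬝ᵥ ((sel M L (ℓ : ℕ) * (sel M L (n : ℕ))ᵀ) *ᵥ a)))
      = (1 / 3 : ℂ) * (((min L (M - L) : ℕ) : ℂ) + 1) *
          (((min L (M - L) : ℕ) : ℂ) *
            (2 * ((min L (M - L) : ℕ) : ℂ) - 3 * (M : ℂ) - 2) +
            6 * ((M - L + 1 : ℕ) : ℂ) * (L : ℂ)) -
        ((M - L + 1 : ℕ) : ℂ) * (L : ℂ) := by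
  have key : ∀ ℓ n : Fin L,
      Complex.exp (Complex.I * (((n : ℝ) - (ℓ : ℝ)) : ℝ) * (μ : ℂ)) *
        (star a ⬝ᵥ ((sel M L (ℓ : ℕ) * (sel M L (n : ℕ))ᵀ) *ᵥ a))
      = ((max (((M - L + 1 : ℕ) : ℤ) - |((ℓ : ℕ) : ℤ) - ((n : ℕ) : ℤ)|) 0 : ℤ) : ℂ) :=
    fun ℓ n => term_eq M L hL hLM μ t a ha ℓ n ℓ.isLt n.isLt
  have h1 : (∑ ℓ : Fin L, ∑ n : Fin L,
        Complex.exp (Complex.I * (((n : ℝ) - (ℓ : ℝ)) : ℝ) * (μ : ℂ)) *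
          (star a ⬝ᵥ ((sel M L (ℓ : ℕ) * (sel M L (n : ℕ))ᵀ) *ᵥ a)))
      = ∑ ℓ : Fin L, ∑ n : Fin L,
          ((max (((M - L + 1 : ℕ) : ℤ) - |((ℓ : ℕ) : ℤ) - ((n : ℕ) : ℤ)|) 0 : ℤ) : ℂ) :=
    Finset.sum_congr rfl fun ℓ _ => Finset.sum_congr rfl fun n _ => key ℓ n
  refine ⟨h1, ?_⟩
  rw [h1]
  have hconv : (∑ ℓ : Fin L, ∑ n : Fin L,
        ((max (((M - L + 1 : ℕ) : ℤ) - |((ℓ : ℕ) : ℤ) - ((n : ℕ) : ℤ)|) 0 : ℤ) : ℂ))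
      = ((∑ ℓ ∈ Finset.range L, ∑ n ∈ Finset.range L,
          max (((M - L + 1 : ℕ) : ℤ) - |(ℓ : ℤ) - (n : ℤ)|) 0 : ℤ) : ℂ) := by
    rw [Int.cast_sum]
    rw [Fin.sum_univ_eq_sum_range (fun ℓ => ∑ n : Fin L,
      ((max (((M - L + 1 : ℕ) : ℤ) - |(ℓ : ℤ) - ((n : ℕ) : ℤ)|) 0 : ℤ) : ℂ))]
    apply Finset.sum_congr rfl
    intro ℓ _
    rw [Int.cast_sum]
    rw [Fin.sum_univ_eq_sum_range (fun n =>
      ((max (((M - L + 1 : ℕ) : ℤ) - |(ℓ : ℤ) - (n : ℤ)|) 0 : ℤ) : ℂ))]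
  rw [hconv]
  set k := min L (M - L) with hkdef
  set S : ℤ := ∑ ℓ ∈ Finset.range L, ∑ n ∈ Finset.range L,
      max (((M - L + 1 : ℕ) : ℤ) - |(ℓ : ℤ) - (n : ℤ)|) 0 with hSdef
  have hm1 : (1 : ℤ) ≤ ((M - L + 1 : ℕ) : ℤ) := by omega
  have hS := sumS ((M - L + 1 : ℕ) : ℤ) hm1 L
  have hk : min ((L : ℕ) : ℤ) (((M - L + 1 : ℕ) : ℤ) - 1) = ((k : ℕ) : ℤ) := by
    rw [hkdef]; omega
  rw [hk] at hS
  have hm' : ((M - L + 1 : ℕ) : ℤ) = (M : ℤ) - (L : ℤ) + 1 := by omega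
  have hS2 : 3 * S = ((k : ℤ) + 1) *
        ((k : ℤ) * (2 * (k : ℤ) - 3 * (M : ℤ) - 2) + 6 * ((M - L + 1 : ℕ) : ℤ) * (L : ℤ))
      - 3 * ((M - L + 1 : ℕ) : ℤ) * (L : ℤ) := by
    linear_combination hS - 3 * ((k : ℤ) + 1) * (k : ℤ) * hm'
  have hC : (3 : ℂ) * (S : ℂ) = ((k : ℂ) + 1) *
        ((k : ℂ) * (2 * (k : ℂ) - 3 * (M : ℂ) - 2) + 6 * ((M - L + 1 : ℕ) : ℂ) * (L : ℂ))
      - 3 * ((M - L + 1 : ℕ) : ℂ) * (L : ℂ) := by exact_mod_cast hS2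
  linear_combination hC / 3
end

section
/- Let M, L be integers with 1 ≤ L ≤ M−1 and m = M−L+1 ≥ 2, and let μ ∈ ℝ. Define b ∈ ℂ^m by b_0 = −exp(iμ(M−1)/2), b_{m−1} = exp(−iμ(M−2L+1)/2), and b_k = 0 for 0 < k < m−1. Then Σ_{ℓ=1}^{L} Σ_{n=1}^{L} exp(iμ(n−ℓ)) · bᵀ (J_ℓ J_nᵀ) conj(b) = 2 · min{L, M−L}. -/
open Matrix Complex

/-- The vector `b ∈ ℂ^m`, `m = M - L + 1`, with `b_0 = -exp(iμ(M-1)/2)`,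
`b_{m-1} = exp(-iμ(M-2L+1)/2)` and all other entries zero. -/
noncomputable def bvec (M L : ℕ) (μ : ℝ) : Fin (M - L + 1) → ℂ :=
  fun k =>
    if (k : ℕ) = 0 then -Complex.exp (Complex.I * (μ : ℂ) * ((((M : ℝ) - 1) / 2) : ℝ))
    else if (k : ℕ) = M - L + 1 - 1 then
      Complex.exp (-(Complex.I * (μ : ℂ) * ((((M : ℝ) - 2 * (L : ℝ) + 1) / 2) : ℝ)))
    else 0

/-!
Write `b_k = s_k · conj (a_k)` with `a` the centred steering vector and `s = (-1, 0, …, 0, 1)`.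
On every nonzero entry of `J_ℓ J_nᵀ` we have `p + ℓ = q + n`, so the phase `exp (iμ(n - ℓ))`
cancels `conj (a_p) a_q` exactly and the form becomes `∑_{p,q} s_p s_q #{(ℓ, n) | p + ℓ = q + n}`.
The two diagonal pairs of `{0, M - L}` contribute `L` each, the two off-diagonal ones
`-(L - (M - L))` each (truncated), which leaves `2 min {L, M - L}`.
-/

open Finset ComplexConjugate

lemma sel_mul_sel_transpose_apply {M L ℓ n : ℕ} (hLM : L ≤ M) (hℓ : ℓ < L)
    (p q : Fin (M - L + 1)) :
    (sel M L ℓ * (sel M L n)ᵀ) p q = if (p : ℕ) + ℓ = q + n then 1 else 0 := by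
  rw [Matrix.mul_apply, sum_eq_single ⟨p + ℓ, by omega⟩]
  · simp [sel]
  · intro r _ hr
    simp only [sel, transpose_apply, of_apply, ite_mul, one_mul, zero_mul]
    exact if_neg fun h => hr (Fin.ext h)
  · simp

noncomputable def steering (M : ℕ) (μ : ℝ) (k : ℕ) : ℂ :=
  cexp (I * ((((k : ℝ) - ((M : ℝ) - 1) / 2) * μ : ℝ)))

def boundarySign (M L k : ℕ) : ℤ :=
  if k = 0 then -1 else if k = M - L then 1 else 0

lemma bvec_eq_boundarySign_mul_conj_steering {M L : ℕ} (hLM : L ≤ M) (μ : ℝ)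
    (k : Fin (M - L + 1)) :
    bvec M L μ k = boundarySign M L k * conj (steering M μ k) := by
  simp only [bvec, boundarySign, steering, Nat.add_sub_cancel, ← Complex.exp_conj]
  split_ifs with h0 hd
  · simp only [h0, Int.cast_neg, Int.cast_one, neg_mul, one_mul, neg_inj]
    congr 1
    simp only [map_mul, conj_I, conj_ofReal]
    push_cast
    ring
  · simp only [Int.cast_one, one_mul, hd]
    congr 1
    simp only [map_mul, conj_I, conj_ofReal]
    push_cast [hLM]
    ring
  · simp

lemma phase_mul_conj_steering_mul_steering {M p q ℓ n : ℕ} (h : p + ℓ = q + n) (μ : ℝ) :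
    cexp (I * μ * ((n : ℝ) - ℓ : ℝ)) * (conj (steering M μ p) * steering M μ q) = 1 := by
  have h' : (p : ℂ) + ℓ = q + n := by exact_mod_cast h
  simp only [steering, ← Complex.exp_conj, map_mul, conj_I, conj_ofReal, ← Complex.exp_add]
  convert Complex.exp_zero using 2
  push_cast
  linear_combination (-I * μ) * h'

lemma phase_mul_bvec_quadForm {M L ℓ n : ℕ} (hLM : L ≤ M) (hℓ : ℓ < L) (μ : ℝ) :
    cexp (I * μ * ((n : ℝ) - ℓ : ℝ)) *
      (bvec M L μ ⬝ᵥ ((sel M L ℓ * (sel M L n)ᵀ) *ᵥ fun i => conj (bvec M L μ i))) =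
    ∑ p : Fin (M - L + 1), (boundarySign M L p : ℂ) *
      ∑ q : Fin (M - L + 1), (boundarySign M L q : ℂ) *
        if (p : ℕ) + ℓ = q + n then 1 else 0 := by
  simp only [dotProduct, mulVec, mul_sum]
  refine sum_congr rfl fun p _ => sum_congr rfl fun q _ => ?_
  rw [sel_mul_sel_transpose_apply hLM hℓ, bvec_eq_boundarySign_mul_conj_steering hLM,
    bvec_eq_boundarySign_mul_conj_steering hLM]
  split_ifs with h
  · simp only [map_mul, map_intCast, conj_conj, mul_one, one_mul]
    linear_combination (boundarySign M L p * boundarySign M L q : ℂ) *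
      phase_mul_conj_steering_mul_steering h μ
  · simp

lemma sum_boundarySign_mul {M L : ℕ} (hLM : L < M) (f : Fin (M - L + 1) → ℂ) :
    ∑ k : Fin (M - L + 1), (boundarySign M L k : ℂ) * f k =
      f ⟨M - L, by omega⟩ - f ⟨0, by omega⟩ := by
  have hd : M - L ≠ 0 := by omega
  rw [Fintype.sum_eq_add ⟨0, by omega⟩ ⟨M - L, by omega⟩ (by simpa [Fin.ext_iff] using hd.symm)]
  · simp [boundarySign, hd]
    ring
  · rintro k ⟨hk0, hkd⟩
    have hk0' : (k : ℕ) ≠ 0 := fun h => hk0 (Fin.ext h)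
    have hkd' : (k : ℕ) ≠ M - L := fun h => hkd (Fin.ext h)
    simp [boundarySign, hk0', hkd']

lemma sum_fin_sum_fin_ite_eq_add (L d : ℕ) :
    ∑ ℓ : Fin L, ∑ n : Fin L, (if (ℓ : ℕ) = d + n then 1 else 0 : ℂ) = ((L - d : ℕ) : ℂ) := by
  rw [sum_comm]
  calc ∑ n : Fin L, ∑ ℓ : Fin L, (if (ℓ : ℕ) = d + n then 1 else 0 : ℂ)
      = ∑ n : Fin L, (if d + (n : ℕ) < L then 1 else 0 : ℂ) := by
        refine sum_congr rfl fun n _ => ?_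
        rw [Fin.sum_univ_eq_sum_range (fun ℓ => if ℓ = d + n then (1 : ℂ) else 0),
          sum_ite_eq', if_congr mem_range rfl rfl]
    _ = ((L - d : ℕ) : ℂ) := by
        rw [Fin.sum_univ_eq_sum_range (fun n => if d + n < L then (1 : ℂ) else 0), sum_boole,
          show {n ∈ range L | d + n < L} = range (L - d) by ext; simp; omega, card_range]

theorem quadratic_form_boundary_general (M L : ℕ)
    (hm : 2 ≤ M - L + 1) (μ : ℝ) :
    (∑ ℓ : Fin L, ∑ n : Fin L,
        Complex.exp (Complex.I * (μ : ℂ) * (((n : ℝ) - (ℓ : ℝ)) : ℝ)) *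
          (bvec M L μ ⬝ᵥ ((sel M L (ℓ : ℕ) * (sel M L (n : ℕ))ᵀ) *ᵥ
            fun i => (starRingEnd ℂ) (bvec M L μ i))))
      = 2 * ((min L (M - L) : ℕ) : ℂ) := by
  have hLM : L < M := by omega
  simp_rw [phase_mul_bvec_quadForm hLM.le (Fin.isLt _), sum_boundarySign_mul hLM,
    add_right_inj, zero_add, sum_sub_distrib]
  have hdiag : ∑ ℓ : Fin L, ∑ n : Fin L, (if (ℓ : ℕ) = n then 1 else 0 : ℂ) = L := by
    simpa using sum_fin_sum_fin_ite_eq_add L 0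
  have hshift := sum_fin_sum_fin_ite_eq_add L (M - L)
  have hshift' : ∑ ℓ : Fin L, ∑ n : Fin L, (if M - L + ℓ = n then 1 else 0 : ℂ) =
      (L - (M - L) : ℕ) := by
    rw [sum_comm]
    simpa only [eq_comm] using hshift
  have hmin : (L : ℂ) = (min L (M - L) : ℕ) + (L - (M - L) : ℕ) := by
    exact_mod_cast (by omega : L = min L (M - L) + (L - (M - L)))
  rw [hdiag, hshift, hshift']
  linear_combination 2 * hmin

/-- The weighted quadratic form of the subarray selection matrices evaluated at the
boundary vector `b`: `Σ_{ℓ,n} exp(iμ(n-ℓ)) bᵀ (J_ℓ J_nᵀ) conj(b) = 2 min{L, M-L}`. -/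
theorem quadratic_form_boundary (M L : ℕ) (hL : 1 ≤ L) (hLM : L ≤ M - 1)
    (hm : 2 ≤ M - L + 1) (μ : ℝ) :
    (∑ ℓ : Fin L, ∑ n : Fin L,
        Complex.exp (Complex.I * (μ : ℂ) * (((n : ℝ) - (ℓ : ℝ)) : ℝ)) *
          (bvec M L μ ⬝ᵥ ((sel M L (ℓ : ℕ) * (sel M L (n : ℕ))ᵀ) *ᵥ
            fun i => (starRingEnd ℂ) (bvec M L μ i))))
      = 2 * ((min L (M - L) : ℕ) : ℂ) :=
  quadratic_form_boundary_general M L hm μ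
end

section
/- Let M ≥ 2 be an integer and consider the function f(L) = (M−L)²·L on the integers 1 ≤ L ≤ ⌊M/2⌋. Then f attains its maximum exactly at L* given by: L* = M/3 if M ≡ 0 (mod 3); L* = (M−1)/3 if M ≡ 1 (mod 3); and L* = (M+1)/3 if M ≡ 2 (mod 3); that is, f(L) ≤ f(L*) for all integers 1 ≤ L ≤ ⌊M/2⌋, with equality only for L = L* (whenever ⌊M/2⌋ ≥ 2). Equivalently, the integer number of subarrays minimizing the single-source MSE branch 1/((M−L)²L) is obtained by rounding M/3 to the nearest integer. -/
set_option maxHeartbeats 1000000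


/-- The integer-optimal number of subarrays: `M/3` rounded to the nearest integer,
i.e. `M/3` if `M ≡ 0 (mod 3)`, `(M-1)/3` if `M ≡ 1 (mod 3)`, `(M+1)/3` if
`M ≡ 2 (mod 3)`. -/
def Lstar (M : ℕ) : ℕ :=
  if M % 3 = 0 then M / 3 else if M % 3 = 1 then (M - 1) / 3 else (M + 1) / 3

lemma one_le_sq_of_ne {a b : ℤ} (h : a ≠ b) : 1 ≤ (a - b) ^ 2 := by
  have h6 : a - b ≠ 0 := sub_ne_zero.2 h
  have h7 := Int.one_le_abs h6
  nlinarith [sq_abs (a - b), abs_nonneg (a - b)]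


/-- Over the integers `1 ≤ L ≤ ⌊M/2⌋`, the function `f(L) = (M-L)² L` (the reciprocal
of the single-source MSE branch) attains its maximum exactly at `L* = Lstar M`
(rounding `M/3` to the nearest integer): `f(L) ≤ f(L*)` for all admissible `L`, with
equality only for `L = L*` whenever `⌊M/2⌋ ≥ 2`. -/
theorem integer_optimal_subarrays (M : ℕ) (hM : 2 ≤ M) :
    (1 ≤ Lstar M ∧ Lstar M ≤ M / 2) ∧
    ∀ L : ℕ, 1 ≤ L → L ≤ M / 2 →
      (M - L) ^ 2 * L ≤ (M - Lstar M) ^ 2 * Lstar M ∧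
      (2 ≤ M / 2 → (M - L) ^ 2 * L = (M - Lstar M) ^ 2 * Lstar M → L = Lstar M) := by
  have hmod : M % 3 = 0 ∨ M % 3 = 1 ∨ M % 3 = 2 := by omega
  rcases hmod with h | h | h
  · -- M = 3k, L* = k
    obtain ⟨k, rfl⟩ : ∃ k, M = 3 * k := ⟨M / 3, by omega⟩
    have hk : 1 ≤ k := by omega
    have hL : Lstar (3 * k) = k := by unfold Lstar; split_ifs <;> omega
    rw [hL]
    refine ⟨⟨by omega, by omega⟩, ?_⟩
    intro L h1 h2
    have hLM : L ≤ 3 * k := by omega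
    have hkM : k ≤ 3 * k := by omega
    have h1' : (1 : ℤ) ≤ (L : ℤ) := by exact_mod_cast h1
    have h2' : 2 * (L : ℤ) ≤ 3 * (k : ℤ) := by
      have : 2 * L ≤ 3 * k := by omega
      exact_mod_cast this
    have hk' : (1 : ℤ) ≤ (k : ℤ) := by exact_mod_cast hk
    constructor
    · zify [hLM, hkM]
      nlinarith [mul_nonneg (sq_nonneg ((L : ℤ) - k))
        (show (0 : ℤ) ≤ 4 * k - L by linarith)]
    · intro _ heq
      by_contra hne
      have h5 : 1 ≤ ((L : ℤ) - k) ^ 2 := one_le_sq_of_ne (by exact_mod_cast hne)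
      zify [hLM, hkM] at heq
      nlinarith [mul_le_mul_of_nonneg_right h5
        (show (0 : ℤ) ≤ 4 * k - L by linarith)]
  · -- M = 3k+1, L* = k
    obtain ⟨k, rfl⟩ : ∃ k, M = 3 * k + 1 := ⟨M / 3, by omega⟩
    have hk : 1 ≤ k := by omega
    have hL : Lstar (3 * k + 1) = k := by unfold Lstar; split_ifs <;> omega
    rw [hL]
    refine ⟨⟨by omega, by omega⟩, ?_⟩
    intro L h1 h2
    have hLM : L ≤ 3 * k + 1 := by omega
    have hkM : k ≤ 3 * k + 1 := by omega
    have h1' : (1 : ℤ) ≤ (L : ℤ) := by exact_mod_cast h1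
    have h2' : 2 * (L : ℤ) ≤ 3 * (k : ℤ) + 1 := by
      have : 2 * L ≤ 3 * k + 1 := by omega
      exact_mod_cast this
    have hk' : (1 : ℤ) ≤ (k : ℤ) := by exact_mod_cast hk
    rcases le_or_gt L k with hc | hc
    · have hc' : (L : ℤ) ≤ k := by exact_mod_cast hc
      have hQ : 0 ≤ (L : ℤ) ^ 2 - (5 * k + 2) * L + (2 * k + 1) ^ 2 := by
        nlinarith [mul_nonneg (show (0 : ℤ) ≤ k - L by linarith)
          (show (0 : ℤ) ≤ 3 * k + 1 - L by linarith)]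
      constructor
      · zify [hLM, hkM]
        nlinarith [mul_nonneg (show (0 : ℤ) ≤ k - L by linarith) hQ]
      · intro _ heq
        by_contra hne
        have hlt : (L : ℤ) + 1 ≤ k := by
          exact_mod_cast (show L + 1 ≤ k by omega)
        have hQ1 : (3 : ℤ) ≤ (L : ℤ) ^ 2 - (5 * k + 2) * L + (2 * k + 1) ^ 2 := by
          nlinarith [mul_nonneg (show (0 : ℤ) ≤ k - L by linarith)
            (show (0 : ℤ) ≤ 3 * k + 1 - L by linarith)]
        zify [hLM, hkM] at heq
        nlinarith [mul_le_mul (show (1 : ℤ) ≤ k - L by linarith) hQ1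
          (by norm_num) (show (0 : ℤ) ≤ k - L by linarith)]
    · have hc' : (k : ℤ) + 1 ≤ L := by exact_mod_cast hc
      have h4 : (L : ℤ) ≤ 4 * k + 1 := by linarith
      have hQ : (k : ℤ) ≤ (5 * k + 2) * L - (L : ℤ) ^ 2 - (2 * k + 1) ^ 2 := by
        nlinarith [mul_nonneg (show (0 : ℤ) ≤ (L : ℤ) - k - 1 by linarith)
          (show (0 : ℤ) ≤ 4 * k + 1 - L by linarith)]
      constructor
      · zify [hLM, hkM]
        nlinarith [mul_nonneg (show (0 : ℤ) ≤ (L : ℤ) - k by linarith)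
          (show (0 : ℤ) ≤ (5 * k + 2) * L - (L : ℤ) ^ 2 - (2 * k + 1) ^ 2 by linarith)]
      · intro _ heq
        zify [hLM, hkM] at heq
        exfalso
        nlinarith [mul_le_mul (show (1 : ℤ) ≤ (L : ℤ) - k by linarith)
          (show (1 : ℤ) ≤ (5 * k + 2) * L - (L : ℤ) ^ 2 - (2 * k + 1) ^ 2 by linarith)
          (by norm_num) (show (0 : ℤ) ≤ (L : ℤ) - k by linarith)]
  · -- M = 3k+2, L* = k+1
    obtain ⟨k, rfl⟩ : ∃ k, M = 3 * k + 2 := ⟨M / 3, by omega⟩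
    have hL : Lstar (3 * k + 2) = k + 1 := by unfold Lstar; split_ifs <;> omega
    rw [hL]
    refine ⟨⟨by omega, by omega⟩, ?_⟩
    intro L h1 h2
    have hLM : L ≤ 3 * k + 2 := by omega
    have hkM : k + 1 ≤ 3 * k + 2 := by omega
    have h1' : (1 : ℤ) ≤ (L : ℤ) := by exact_mod_cast h1
    have h2' : 2 * (L : ℤ) ≤ 3 * (k : ℤ) + 2 := by
      have : 2 * L ≤ 3 * k + 2 := by omega
      exact_mod_cast this
    have hk' : (0 : ℤ) ≤ (k : ℤ) := by positivity
    rcases le_or_gt L k with hc | hc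
    · have hc' : (L : ℤ) ≤ k := by exact_mod_cast hc
      have hQ : (2 : ℤ) ≤ (L : ℤ) ^ 2 - (5 * k + 3) * L + (2 * k + 1) ^ 2 := by
        nlinarith [mul_nonneg (show (0 : ℤ) ≤ k - L by linarith)
          (show (0 : ℤ) ≤ 3 * k + 2 - L by linarith)]
      constructor
      · zify [hLM, hkM]
        nlinarith [mul_nonneg (show (0 : ℤ) ≤ k + 1 - L by linarith)
          (show (0 : ℤ) ≤ (L : ℤ) ^ 2 - (5 * k + 3) * L + (2 * k + 1) ^ 2 by linarith)]
      · intro _ heq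
        zify [hLM, hkM] at heq
        exfalso
        nlinarith [mul_le_mul (show (1 : ℤ) ≤ k + 1 - L by linarith)
          (show (1 : ℤ) ≤ (L : ℤ) ^ 2 - (5 * k + 3) * L + (2 * k + 1) ^ 2 by linarith)
          (by norm_num) (show (0 : ℤ) ≤ k + 1 - L by linarith)]
    · rcases eq_or_lt_of_le (Nat.succ_le_of_lt hc) with hc2 | hc2
      · -- L = k+1
        have : L = k + 1 := hc2.symm
        constructor
        · rw [this]
        · intro _ _; exact this
      · have hc' : (k : ℤ) + 2 ≤ L := by exact_mod_cast hc2
        have h4 : (L : ℤ) ≤ 4 * k + 1 := by linarith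
        have hQ : (5 * k + 1 : ℤ) ≤ (5 * k + 3) * L - (L : ℤ) ^ 2 - (2 * k + 1) ^ 2 := by
          nlinarith [mul_nonneg (show (0 : ℤ) ≤ (L : ℤ) - k - 2 by linarith)
            (show (0 : ℤ) ≤ 4 * k + 1 - L by linarith)]
        constructor
        · zify [hLM, hkM]
          nlinarith [mul_nonneg (show (0 : ℤ) ≤ (L : ℤ) - k - 1 by linarith)
            (show (0 : ℤ) ≤ (5 * k + 3) * L - (L : ℤ) ^ 2 - (2 * k + 1) ^ 2 by linarith)]
        · intro _ heq
          zify [hLM, hkM] at heq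
          exfalso
          nlinarith [mul_le_mul (show (1 : ℤ) ≤ (L : ℤ) - k - 1 by linarith)
            (show (1 : ℤ) ≤ (5 * k + 3) * L - (L : ℤ) ^ 2 - (2 * k + 1) ^ 2 by linarith)
            (by norm_num) (show (0 : ℤ) ≤ (L : ℤ) - k - 1 by linarith)]
end
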